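/- Let G : 𝕋 → ℝ be a C² function which is β-Morse for some β > 0. Then the set of critical points of G in one period is finite, and its cardinality is at most π·√(2·sup_𝕋|G''|/β). -/

import Mathlib

open scoped Real

/-!
Let `M = sup |G''|`. Expanding `G` to second order at a critical point `a` gives
`|G b - G a| ≤ M (b - a)² / 2`, so the separation `β` of critical values forces any two critical
points that differ modulo `2π` to be at least `δ = √(2β/M)` apart, also across the period.
At most `2π / δ = π √(2M/β)` such points fit on the circle. The first Morse condition at a
critical point gives `β ≤ M`, so `δ ≤ 2π`.
-/

/-- `F : 𝕋 → ℝ` (modeled as a `2π`-periodic function on `ℝ`) is `β`-Morse: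
`min_θ (|F'(θ)| + |F''(θ)|) ≥ β` and any two critical points which are distinct modulo `2π`
have critical values at distance at least `β`. -/
def BetaMorse (β : ℝ) (F : ℝ → ℝ) : Prop :=
  (∀ θ, β ≤ |deriv F θ| + |deriv (deriv F) θ|) ∧
  (∀ θ₁ θ₂, deriv F θ₁ = 0 → deriv F θ₂ = 0 → (¬ ∃ m : ℤ, θ₁ = θ₂ + 2 * π * m) →
    β ≤ |F θ₁ - F θ₂|)

theorem Function.Periodic.deriv {𝕜 F : Type*} [NontriviallyNormedField 𝕜] [NormedAddCommGroup F]
    [NormedSpace 𝕜 F] {f : 𝕜 → F} {c : 𝕜} (h : Function.Periodic f c) :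
    Function.Periodic (deriv f) c := fun x => by
  rw [← deriv_comp_add_const, h.funext]

theorem abs_sub_le_mul_sq_of_deriv_eq_zero {f : ℝ → ℝ} {M a b : ℝ} (hf : Differentiable ℝ f)
    (hf' : Differentiable ℝ (deriv f)) (hM : ∀ x, |deriv (deriv f) x| ≤ M)
    (ha : deriv f a = 0) (hab : a ≤ b) : |f b - f a| ≤ M * (b - a) ^ 2 / 2 := by
  have hslope : ∀ x, |deriv f x| ≤ M * |x - a| := fun x => by
    simpa [ha, Real.norm_eq_abs] using Convex.norm_image_sub_le_of_norm_deriv_le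
      (fun y _ => hf' y) (fun y _ => hM y) convex_univ (Set.mem_univ a) (Set.mem_univ x)
  have hB : ∀ x, HasDerivAt (fun x => M * (x - a) ^ 2 / 2) (M * (x - a)) x := fun x => by
    refine (((hasDerivAt_id' x).sub_const a).fun_pow 2 |>.const_mul M |>.div_const 2).congr_deriv ?_
    norm_num; ring
  refine image_norm_le_of_norm_deriv_right_le_deriv_boundary (f := fun x => f x - f a)
    (hf.continuous.sub continuous_const).continuousOn
    (fun x _ => ((hf x).hasDerivAt.sub_const (f a)).hasDerivWithinAt) (by simp) hB
    (fun x hx => ?_) ⟨hab, le_rfl⟩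
  simpa [abs_of_nonneg (sub_nonneg.2 hx.1)] using hslope x

theorem not_exists_int_eq_add_mul {p x y : ℝ} (hp : 0 < p) (hyx : y < x) (hxy : x < y + p) :
    ¬ ∃ m : ℤ, x = y + p * m := by
  rintro ⟨m, rfl⟩
  have h0 : (0 : ℝ) < m := pos_of_mul_pos_right (by linarith) hp.le
  have h1 : (m : ℝ) < 1 := by nlinarith
  norm_cast at h0 h1
  omega

theorem natFloor_div_injOn {S : Set ℝ} {θ₀ δ : ℝ} (hδ : 0 < δ) (hS : ∀ θ ∈ S, θ₀ ≤ θ)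
    (hsep : S.Pairwise fun a b => δ ≤ |a - b|) : S.InjOn fun θ => ⌊(θ - θ₀) / δ⌋₊ := by
  intro a ha b hb hab
  by_contra hne
  have hnonneg : ∀ θ ∈ S, 0 ≤ (θ - θ₀) / δ := fun θ hθ =>
    div_nonneg (sub_nonneg.2 (hS θ hθ)) hδ.le
  have h := Int.abs_sub_lt_one_of_floor_eq_floor (a := (a - θ₀) / δ) (b := (b - θ₀) / δ) <| by
    rw [← Int.natCast_floor_eq_floor (hnonneg a ha), ← Int.natCast_floor_eq_floor (hnonneg b hb)]
    exact congrArg Nat.cast hab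
  rw [← sub_div, sub_sub_sub_cancel_right, abs_div, abs_of_pos hδ, div_lt_one hδ] at h
  exact (hsep ha hb hne).not_gt h

theorem natFloor_div_lt_natFloor_div {x y δ : ℝ} (hδ : 0 < δ) (hx : 0 ≤ x) (hxy : x + δ ≤ y) :
    ⌊x / δ⌋₊ < ⌊y / δ⌋₊ := by
  rw [Nat.lt_iff_add_one_le, Nat.le_floor_iff (div_nonneg (by linarith) hδ.le), Nat.cast_add_one]
  calc (⌊x / δ⌋₊ : ℝ) + 1 ≤ x / δ + 1 := by gcongr; exact Nat.floor_le (by positivity)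
    _ = (x + δ) / δ := by field_simp
    _ ≤ y / δ := by gcongr

theorem finite_and_ncard_mul_le_of_cyclically_separated {S : Set ℝ} {L δ : ℝ} (hδ : 0 < δ)
    (hδL : δ ≤ L) (hS : S ⊆ Set.Ico 0 L)
    (hsep : ∀ a ∈ S, ∀ b ∈ S, a < b → δ ≤ b - a ∧ δ ≤ a + L - b) :
    S.Finite ∧ S.ncard * δ ≤ L := by
  have hpair : S.Pairwise fun a b => δ ≤ |a - b| := by
    intro a ha b hb hne
    rcases hne.lt_or_gt with h | h
    · rw [abs_sub_comm, abs_of_pos (sub_pos.2 h)]; exact (hsep a ha b hb h).1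
    · rw [abs_of_pos (sub_pos.2 h)]; exact (hsep b hb a ha h).1
  have hfin : S.Finite :=
    Set.Finite.of_injOn (t := Set.Iic ⌊L / δ⌋₊)
      (fun θ hθ => Nat.floor_le_floor (by gcongr; simpa using (hS hθ).2.le))
      (natFloor_div_injOn hδ (fun θ hθ => (hS hθ).1) hpair) (Set.finite_Iic _)
  refine ⟨hfin, ?_⟩
  rcases S.eq_empty_or_nonempty with rfl | hne
  · simpa using hδ.le.trans hδL
  -- Bin the points into the intervals `[θ₀ + kδ, θ₀ + (k+1)δ)` from the smallest point `θ₀`: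
  -- the gap across the period leaves room for only `⌊L / δ⌋` of them.
  obtain ⟨θ₀, hθ₀, hmin⟩ := S.exists_min_image id hfin hne
  have hmaps : ∀ θ ∈ S, ⌊(θ - θ₀) / δ⌋₊ ∈ (Finset.range ⌊L / δ⌋₊ : Set ℕ) := by
    intro θ hθ
    refine Finset.mem_coe.2 (Finset.mem_range.2 (natFloor_div_lt_natFloor_div hδ
      (sub_nonneg.2 (hmin θ hθ)) ?_))
    rcases (hmin θ hθ).eq_or_lt with h | h
    · simp only [id] at h; rw [← h]; simpa using hδL
    · linarith [(hsep θ₀ hθ₀ θ hθ h).2]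
  have hcard := Set.ncard_le_ncard_of_injOn _ hmaps (natFloor_div_injOn hδ hmin hpair)
  rw [Set.ncard_coe_finset, Finset.card_range] at hcard
  calc (S.ncard : ℝ) * δ ≤ ⌊L / δ⌋₊ * δ := by gcongr
    _ ≤ L / δ * δ := by gcongr; exact Nat.floor_le (div_nonneg (hδ.le.trans hδL) hδ.le)
    _ = L := div_mul_cancel₀ L hδ.ne'

theorem finite_and_ncard_mul_le_of_periodic_separated {P : ℝ → Prop} {L δ : ℝ} (hδ : 0 < δ)
    (hδL : δ ≤ L) (hP : ∀ x, P x → P (x + L))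
    (hsep : ∀ a b, P a → P b → a < b → b < a + L → δ ≤ b - a) :
    {x ∈ Set.Ico 0 L | P x}.Finite ∧ {x ∈ Set.Ico 0 L | P x}.ncard * δ ≤ L := by
  refine finite_and_ncard_mul_le_of_cyclically_separated hδ hδL (fun x hx => hx.1) ?_
  rintro a ⟨⟨ha0, haL⟩, ha⟩ b ⟨⟨hb0, hbL⟩, hb⟩ hab
  have hwrap := hsep b (a + L) hb (hP a ha) (by linarith) (by linarith)
  exact ⟨hsep a b ha hb hab (by linarith), by linarith⟩

namespace BetaMorse

variable {β M : ℝ} {G : ℝ → ℝ}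

theorem le_of_deriv_eq_zero (hMorse : BetaMorse β G) (hM : ∀ θ, |deriv (deriv G) θ| ≤ M)
    {c : ℝ} (hc : deriv G c = 0) : β ≤ M := by
  calc β ≤ |deriv G c| + |deriv (deriv G) c| := hMorse.1 c
    _ = |deriv (deriv G) c| := by simp [hc]
    _ ≤ M := hM c

theorem two_div_sqrt_le_sub (hMorse : BetaMorse β G) (hβ : 0 < β) (hd : Differentiable ℝ G)
    (hd' : Differentiable ℝ (deriv G)) (hM : ∀ θ, |deriv (deriv G) θ| ≤ M) {a b : ℝ}
    (ha : deriv G a = 0) (hb : deriv G b = 0) (hab : a < b) (hba : b < a + 2 * π) :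
    2 / √(2 * M / β) ≤ b - a := by
  have hM0 : 0 < M := hβ.trans_le (hMorse.le_of_deriv_eq_zero hM ha)
  have hgap := hMorse.2 b a hb ha (not_exists_int_eq_add_mul Real.two_pi_pos hab hba)
  have htaylor := abs_sub_le_mul_sq_of_deriv_eq_zero hd hd' hM ha hab.le
  rw [div_le_iff₀ (by positivity), ← abs_of_pos (sub_pos.2 hab), ← Real.sqrt_sq_eq_abs,
    ← Real.sqrt_mul (sq_nonneg _), Real.le_sqrt zero_le_two (by positivity), ← mul_div_assoc,
    le_div_iff₀ hβ]
  nlinarith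

end BetaMorse

/-- If `G` is `C²`, `2π`-periodic and `β`-Morse, then the set of critical
points of `G` in one period is finite, with cardinality at most `π·√(2·sup|G''|/β)`. -/
theorem card_critical_points_le (G : ℝ → ℝ) (β : ℝ) (hβ : 0 < β)
    (hG : ContDiff ℝ 2 G) (hGper : ∀ θ, G (θ + 2 * π) = G θ)
    (hMorse : BetaMorse β G) :
    {θ ∈ Set.Ico (0 : ℝ) (2 * π) | deriv G θ = 0}.Finite ∧
      ({θ ∈ Set.Ico (0 : ℝ) (2 * π) | deriv G θ = 0}.ncard : ℝ)
        ≤ π * Real.sqrt (2 * sSup (Set.range fun θ => |deriv (deriv G) θ|) / β) := by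
  have hper : Function.Periodic G (2 * π) := hGper
  have hG' : ContDiff ℝ 1 (deriv G) := hG.deriv'
  have hbdd : BddAbove (Set.range fun θ => |deriv (deriv G) θ|) :=
    ((hper.deriv.deriv.comp abs).compact_of_continuous Real.two_pi_pos.ne'
      hG'.continuous_deriv_one.abs).bddAbove
  set M := sSup (Set.range fun θ => |deriv (deriv G) θ|)
  have hM : ∀ θ, |deriv (deriv G) θ| ≤ M := fun θ => le_csSup hbdd ⟨θ, rfl⟩
  rcases {θ ∈ Set.Ico (0 : ℝ) (2 * π) | deriv G θ = 0}.eq_empty_or_nonempty with hS | ⟨c, -, hc⟩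
  · rw [hS]; exact ⟨Set.finite_empty, by simp; positivity⟩
  have hM0 : 0 < M := hβ.trans_le (hMorse.le_of_deriv_eq_zero hM hc)
  have hδL : 2 / √(2 * M / β) ≤ 2 * π := by
    have : 1 ≤ √(2 * M / β) := Real.one_le_sqrt.2 <| (one_le_div hβ).2 <| by
      linarith [hMorse.le_of_deriv_eq_zero hM hc]
    calc 2 / √(2 * M / β) ≤ 2 := div_le_self zero_le_two this
      _ ≤ 2 * π := by linarith [Real.pi_gt_three]
  obtain ⟨hfin, hcard⟩ := finite_and_ncard_mul_le_of_periodic_separated (by positivity) hδL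
    (fun x hx => (hper.deriv x).trans hx)
    (fun a b => hMorse.two_div_sqrt_le_sub hβ (hG.differentiable two_ne_zero)
      (hG'.differentiable one_ne_zero) hM)
  refine ⟨hfin, ?_⟩
  calc _ ≤ 2 * π / (2 / √(2 * M / β)) := (le_div_iff₀ (by positivity)).2 hcard
    _ = π * √(2 * M / β) := by rw [div_div_eq_mul_div]; ring
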